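/- Let f and g be norms on ℝ^p with dual norms f* and g*, let (a, b) be a linear classifier with a ≠ 0, let ρ > 0, let x_F ∈ ℝ^p satisfy ⟪a, x_F⟫ < b, and let x_RCF ∈ ℝ^p with x_RCF ≠ x_F. Then x_RCF is an optimal robust counterfactual of x_F under f with robustness norm g and radius ρ if and only if there exists λ ∈ ℝ with λ ≠ 0 such that: ⟪a, x_RCF⟫ − ρ · g*(a) = b, λ · ⟪a, x_RCF − x_F⟫ = f(x_RCF − x_F), and f*(λ • a) ≤ 1. -/

import Mathlib

/-!
Robustness against every perturbation `s` with `g s ≤ ρ` amounts to the single constraint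
`⟪a, z⟫ ≥ b + ρ g*(a)`, since the worst perturbation decreases `⟪a, ·⟫` by exactly `ρ g*(a)`.
So an optimal robust counterfactual is an ordinary optimal counterfactual for the shifted
threshold `c = b + ρ g*(a)`. For that problem, optimality forces `⟪a, x⟫ = c`, and the
`f`-distance from `x_F` to the half-space `⟪a, ·⟫ ≥ c` is `(c - ⟪a, x_F⟫) / f*(a)`: the bound
`⟪a, v⟫ ≤ f*(a) f(v)` shows nothing shorter is feasible, and a maximiser of `⟪a, ·⟫` on the
`f`-unit ball, suitably scaled, attains it. The multiplier is `λ = 1 / f*(a)`.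
-/

open Finset

noncomputable section

/-- The standard inner product on `Fin p → ℝ`. -/
def dot {p : ℕ} (a x : Fin p → ℝ) : ℝ := ∑ k, a k * x k

/-- `f` is a norm on `ℝ^p`. -/
def IsNorm {p : ℕ} (f : (Fin p → ℝ) → ℝ) : Prop :=
  (∀ x, f x = 0 ↔ x = 0) ∧ (∀ (c : ℝ) (x : Fin p → ℝ), f (c • x) = |c| * f x) ∧
    (∀ x y, f (x + y) ≤ f x + f y)

/-- The dual norm `f*(w) = sup { ⟪w, v⟫ : f v ≤ 1 }`. -/
def dualNorm {p : ℕ} (f : (Fin p → ℝ) → ℝ) (w : Fin p → ℝ) : ℝ :=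
  sSup {t : ℝ | ∃ v : Fin p → ℝ, f v ≤ 1 ∧ t = dot w v}

/-- `xCF` is an optimal counterfactual of the factual `xF` (classified 'No') under norm `f`. -/
def IsOptCF {p : ℕ} (a : Fin p → ℝ) (b : ℝ) (f : (Fin p → ℝ) → ℝ)
    (xF xCF : Fin p → ℝ) : Prop :=
  b ≤ dot a xCF ∧ ∀ z : Fin p → ℝ, b ≤ dot a z → f (xCF - xF) ≤ f (z - xF)

/-- `xRCF` is an optimal robust counterfactual of the factual `xF` (classified 'No')
under norm `f`, with robustness norm `g` and radius `ρ`. -/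
def IsOptRCF {p : ℕ} (a : Fin p → ℝ) (b : ℝ) (f g : (Fin p → ℝ) → ℝ) (ρ : ℝ)
    (xF xRCF : Fin p → ℝ) : Prop :=
  (∀ s : Fin p → ℝ, g s ≤ ρ → b ≤ dot a (xRCF + s)) ∧
    ∀ z : Fin p → ℝ, (∀ s : Fin p → ℝ, g s ≤ ρ → b ≤ dot a (z + s)) →
      f (xRCF - xF) ≤ f (z - xF)

/-- `w` is a subgradient of `f` at `x₀`. -/
def IsSubgradient {p : ℕ} (f : (Fin p → ℝ) → ℝ) (x₀ w : Fin p → ℝ) : Prop :=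
  ∀ y : Fin p → ℝ, f x₀ + dot w (y - x₀) ≤ f y

open Matrix

section Dot

variable {p : ℕ}

lemma dot_add (a x y : Fin p → ℝ) : dot a (x + y) = dot a x + dot a y := dotProduct_add a x y

lemma dot_sub (a x y : Fin p → ℝ) : dot a (x - y) = dot a x - dot a y := dotProduct_sub a x y

lemma dot_neg (a x : Fin p → ℝ) : dot a (-x) = -dot a x := dotProduct_neg a x

lemma dot_zero (a : Fin p → ℝ) : dot a 0 = 0 := dotProduct_zero a

lemma dot_smul (a : Fin p → ℝ) (c : ℝ) (x : Fin p → ℝ) : dot a (c • x) = c * dot a x :=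
  dotProduct_smul c a x

lemma smul_dot (c : ℝ) (a x : Fin p → ℝ) : dot (c • a) x = c * dot a x := smul_dotProduct c a x

lemma dot_self_pos {a : Fin p → ℝ} (ha : a ≠ 0) : 0 < dot a a :=
  dotProduct_self_star_pos_iff.2 ha

lemma continuous_dot (a : Fin p → ℝ) : Continuous (dot a) :=
  continuous_const.dotProduct continuous_id

end Dot

namespace IsNorm

variable {p : ℕ} {f : (Fin p → ℝ) → ℝ}

lemma map_zero (hf : IsNorm f) : f 0 = 0 := (hf.1 0).2 rfl

lemma map_neg (hf : IsNorm f) (x : Fin p → ℝ) : f (-x) = f x := by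
  simpa using hf.2.1 (-1) x

lemma map_smul_of_nonneg (hf : IsNorm f) {c : ℝ} (hc : 0 ≤ c) (x : Fin p → ℝ) :
    f (c • x) = c * f x := by
  rw [hf.2.1, abs_of_nonneg hc]

lemma nonneg (hf : IsNorm f) (x : Fin p → ℝ) : 0 ≤ f x := by
  have h := hf.2.2 x (-x)
  rw [add_neg_cancel, hf.map_zero, hf.map_neg] at h
  linarith

lemma pos (hf : IsNorm f) {x : Fin p → ℝ} (hx : x ≠ 0) : 0 < f x :=
  (hf.nonneg x).lt_of_ne fun h => hx ((hf.1 x).1 h.symm)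

lemma convexOn (hf : IsNorm f) : ConvexOn ℝ Set.univ f := by
  refine ⟨convex_univ, fun x _ y _ s t hs ht _ => ?_⟩
  calc f (s • x + t • y) ≤ f (s • x) + f (t • y) := hf.2.2 _ _
    _ = s • f x + t • f y := by
      rw [hf.map_smul_of_nonneg hs, hf.map_smul_of_nonneg ht, smul_eq_mul, smul_eq_mul]

lemma continuous (hf : IsNorm f) : Continuous f :=
  continuousOn_univ.1 (hf.convexOn.continuousOn isOpen_univ)

lemma exists_pos_mul_norm_le (hf : IsNorm f) : ∃ m : ℝ, 0 < m ∧ ∀ v, m * ‖v‖ ≤ f v := by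
  rcases subsingleton_or_nontrivial (Fin p → ℝ) with _ | _
  · exact ⟨1, one_pos, fun v => by simp [Subsingleton.elim v 0, hf.map_zero]⟩
  obtain ⟨u, hu, hmin⟩ := (isCompact_sphere (0 : Fin p → ℝ) 1).exists_isMinOn
    (NormedSpace.sphere_nonempty.2 zero_le_one) hf.continuous.continuousOn
  have hu_ne : u ≠ 0 := ne_zero_of_mem_unit_sphere ⟨u, hu⟩
  refine ⟨f u, hf.pos hu_ne, fun v => ?_⟩
  rcases eq_or_ne v 0 with rfl | hv
  · simp [hf.map_zero]
  have hnv : 0 < ‖v‖ := norm_pos_iff.2 hv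
  have hv_sphere : ‖v‖⁻¹ • v ∈ Metric.sphere (0 : Fin p → ℝ) 1 := by
    simp [norm_smul, hnv.ne']
  have h := hmin hv_sphere
  rw [Set.mem_ofPred_eq, hf.map_smul_of_nonneg (inv_nonneg.2 hnv.le)] at h
  exact (le_inv_mul_iff₀' hnv).1 h

lemma isCompact_unitBall (hf : IsNorm f) : IsCompact {v : Fin p → ℝ | f v ≤ 1} := by
  obtain ⟨m, hm, hle⟩ := hf.exists_pos_mul_norm_le
  refine Metric.isCompact_of_isClosed_isBounded (isClosed_le hf.continuous continuous_const)
    ((Metric.isBounded_closedBall (x := 0) (r := m⁻¹)).subset fun v hv => ?_)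
  rw [mem_closedBall_zero_iff, ← one_div, le_div_iff₀' hm]
  exact (hle v).trans hv

end IsNorm

section DualNorm

variable {p : ℕ} {f : (Fin p → ℝ) → ℝ}

lemma isGreatest_dualNorm (hf : IsNorm f) (w : Fin p → ℝ) :
    IsGreatest {t : ℝ | ∃ v : Fin p → ℝ, f v ≤ 1 ∧ t = dot w v} (dualNorm f w) := by
  have himage : {t : ℝ | ∃ v : Fin p → ℝ, f v ≤ 1 ∧ t = dot w v} = dot w '' {v | f v ≤ 1} := by
    ext t
    simp only [Set.mem_image, Set.mem_ofPred_eq, eq_comm]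
  obtain ⟨t, ht⟩ := (hf.isCompact_unitBall.image (continuous_dot w)).exists_isGreatest
    ⟨dot w 0, 0, by simp [hf.map_zero], rfl⟩
  rwa [himage, dualNorm, himage, ht.csSup_eq]

lemma exists_dot_eq_dualNorm (hf : IsNorm f) (w : Fin p → ℝ) :
    ∃ v, f v ≤ 1 ∧ dot w v = dualNorm f w := by
  obtain ⟨v, hv, h⟩ := (isGreatest_dualNorm hf w).1
  exact ⟨v, hv, h.symm⟩

lemma dot_le_dualNorm (hf : IsNorm f) (w : Fin p → ℝ) {v : Fin p → ℝ} (hv : f v ≤ 1) :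
    dot w v ≤ dualNorm f w :=
  (isGreatest_dualNorm hf w).2 ⟨v, hv, rfl⟩

lemma dualNorm_nonneg (hf : IsNorm f) (w : Fin p → ℝ) : 0 ≤ dualNorm f w := by
  simpa [dot_zero] using dot_le_dualNorm hf w (hf.map_zero.trans_le zero_le_one)

lemma dot_le_dualNorm_mul (hf : IsNorm f) (w v : Fin p → ℝ) : dot w v ≤ dualNorm f w * f v := by
  rcases eq_or_ne v 0 with rfl | hv
  · simp [dot_zero, hf.map_zero]
  have hfv := hf.pos hv
  have h := dot_le_dualNorm hf w (v := (f v)⁻¹ • v)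
    (by rw [hf.map_smul_of_nonneg (inv_nonneg.2 hfv.le), inv_mul_cancel₀ hfv.ne'])
  rw [dot_smul] at h
  exact (inv_mul_le_iff₀ hfv).1 h |>.trans_eq (mul_comm _ _)

lemma dot_le_of_dualNorm_le_one (hf : IsNorm f) {w : Fin p → ℝ} (hw : dualNorm f w ≤ 1)
    (v : Fin p → ℝ) : dot w v ≤ f v :=
  (dot_le_dualNorm_mul hf w v).trans (mul_le_of_le_one_left (hf.nonneg v) hw)

lemma dualNorm_pos (hf : IsNorm f) {w : Fin p → ℝ} (hw : w ≠ 0) : 0 < dualNorm f w :=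
  pos_of_mul_pos_left ((dot_self_pos hw).trans_le (dot_le_dualNorm_mul hf w w)) (hf.nonneg w)

lemma dualNorm_smul_of_nonneg (hf : IsNorm f) {c : ℝ} (hc : 0 ≤ c) (w : Fin p → ℝ) :
    dualNorm f (c • w) = c * dualNorm f w := by
  obtain ⟨v, hv, hdot⟩ := exists_dot_eq_dualNorm hf (c • w)
  obtain ⟨u, hu, hdot'⟩ := exists_dot_eq_dualNorm hf w
  apply le_antisymm
  · rw [← hdot, smul_dot]
    exact mul_le_mul_of_nonneg_left (dot_le_dualNorm hf w hv) hc
  · rw [← hdot', ← smul_dot]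
    exact dot_le_dualNorm hf (c • w) hu

lemma exists_dot_eq_and_le_div_dualNorm (hf : IsNorm f) {w : Fin p → ℝ} (hw : w ≠ 0)
    {r : ℝ} (hr : 0 ≤ r) : ∃ v, dot w v = r ∧ f v ≤ r / dualNorm f w := by
  obtain ⟨v, hv, hdot⟩ := exists_dot_eq_dualNorm hf w
  have hpos := dualNorm_pos hf hw
  refine ⟨(r / dualNorm f w) • v, ?_, ?_⟩
  · rw [dot_smul, hdot, div_mul_cancel₀ r hpos.ne']
  · rw [hf.map_smul_of_nonneg (div_nonneg hr hpos.le)]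
    exact mul_le_of_le_one_right (div_nonneg hr hpos.le) hv

end DualNorm

section Counterfactual

variable {p : ℕ} {f : (Fin p → ℝ) → ℝ} {a : Fin p → ℝ} {c : ℝ} {xF x : Fin p → ℝ}

lemma forall_le_dot_add_iff {g : (Fin p → ℝ) → ℝ} (hg : IsNorm g) {ρ : ℝ} (hρ : 0 ≤ ρ)
    (a : Fin p → ℝ) (b : ℝ) (z : Fin p → ℝ) :
    (∀ s, g s ≤ ρ → b ≤ dot a (z + s)) ↔ b + ρ * dualNorm g a ≤ dot a z := by
  constructor
  · intro h
    obtain ⟨v, hv, hdot⟩ := exists_dot_eq_dualNorm hg a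
    have h' := h (-(ρ • v)) <| by
      rw [hg.map_neg, hg.map_smul_of_nonneg hρ]
      exact mul_le_of_le_one_right hρ hv
    rw [dot_add, dot_neg, dot_smul, hdot] at h'
    linarith
  · intro hz s hs
    have h := dot_le_dualNorm_mul hg a (-s)
    rw [dot_neg, hg.map_neg] at h
    have := mul_le_mul_of_nonneg_left hs (dualNorm_nonneg hg a)
    rw [dot_add]
    linarith

lemma isOptRCF_iff_isOptCF {g : (Fin p → ℝ) → ℝ} (hg : IsNorm g) {ρ : ℝ} (hρ : 0 ≤ ρ)
    (b : ℝ) : IsOptRCF a b f g ρ xF x ↔ IsOptCF a (b + ρ * dualNorm g a) f xF x := by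
  simp only [IsOptRCF, IsOptCF, forall_le_dot_add_iff hg hρ]

lemma IsOptCF.dot_eq (hf : IsNorm f) (hxF : dot a xF < c) (h : IsOptCF a c f xF x) :
    dot a x = c := by
  obtain ⟨hx, hopt⟩ := h
  have hd : 0 < dot a (x - xF) := by rw [dot_sub]; linarith
  have hd_ne : x - xF ≠ 0 := fun h0 => by rw [h0, dot_zero] at hd; exact hd.false
  set t := (c - dot a xF) / dot a (x - xF)
  have ht : 0 ≤ t := div_nonneg (by linarith) hd.le
  -- `xF + t • (x - xF)` is the point of the segment `[xF, x]` on the boundary hyperplane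
  have h := hopt (xF + t • (x - xF)) <| by
    rw [dot_add, dot_smul, div_mul_cancel₀ _ hd.ne']
    linarith
  rw [add_sub_cancel_left, hf.map_smul_of_nonneg ht] at h
  have ht1 : 1 ≤ t := le_of_mul_le_mul_right (by rwa [one_mul]) (hf.pos hd_ne)
  rw [le_div_iff₀ hd, one_mul, dot_sub] at ht1
  linarith

lemma IsOptCF.exists_multiplier (hf : IsNorm f) (ha : a ≠ 0) (hxF : dot a xF < c)
    (h : IsOptCF a c f xF x) :
    ∃ l : ℝ, l ≠ 0 ∧ dot a x = c ∧ l * dot a (x - xF) = f (x - xF) ∧ dualNorm f (l • a) ≤ 1 := by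
  have hx := h.dot_eq hf hxF
  have hF := dualNorm_pos hf ha
  have hd : 0 ≤ dot a (x - xF) := by rw [dot_sub]; linarith
  obtain ⟨v, hv, hfv⟩ := exists_dot_eq_and_le_div_dualNorm hf ha hd
  have hle : f (x - xF) ≤ dot a (x - xF) / dualNorm f a := by
    have h' := h.2 (xF + v) (by rw [dot_add, hv, dot_sub]; linarith)
    rw [add_sub_cancel_left] at h'
    exact h'.trans hfv
  refine ⟨(dualNorm f a)⁻¹, inv_ne_zero hF.ne', hx, le_antisymm ?_ ?_, ?_⟩
  · rw [inv_mul_le_iff₀ hF]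
    exact dot_le_dualNorm_mul hf a _
  · rwa [inv_mul_eq_div]
  · rw [dualNorm_smul_of_nonneg hf (inv_nonneg.2 hF.le), inv_mul_cancel₀ hF.ne']

lemma isOptCF_of_multiplier (hf : IsNorm f) (hxF : dot a xF < c) {l : ℝ} (hx : dot a x = c)
    (hl : l * dot a (x - xF) = f (x - xF)) (hdual : dualNorm f (l • a) ≤ 1) :
    IsOptCF a c f xF x := by
  refine ⟨hx.ge, fun z hz => ?_⟩
  have hd : 0 < dot a (x - xF) := by rw [dot_sub]; linarith
  have hl0 : 0 ≤ l := nonneg_of_mul_nonneg_left (hl ▸ hf.nonneg _) hd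
  calc f (x - xF) = l * dot a (x - xF) := hl.symm
    _ ≤ l * dot a (z - xF) :=
      mul_le_mul_of_nonneg_left (by rw [dot_sub, dot_sub]; linarith) hl0
    _ = dot (l • a) (z - xF) := (smul_dot l a _).symm
    _ ≤ f (z - xF) := dot_le_of_dualNorm_le_one hf hdual _

lemma isOptCF_iff (hf : IsNorm f) (ha : a ≠ 0) (hxF : dot a xF < c) :
    IsOptCF a c f xF x ↔
      ∃ l : ℝ, l ≠ 0 ∧ dot a x = c ∧ l * dot a (x - xF) = f (x - xF) ∧
        dualNorm f (l • a) ≤ 1 :=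
  ⟨IsOptCF.exists_multiplier hf ha hxF, fun ⟨_, _, hx, hl, hdual⟩ =>
    isOptCF_of_multiplier hf hxF hx hl hdual⟩

end Counterfactual

theorem rcf_optimality_iff_general {p : ℕ}
    (f g : (Fin p → ℝ) → ℝ) (hf : IsNorm f) (hg : IsNorm g)
    (a : Fin p → ℝ) (ha : a ≠ 0) (b : ℝ) (ρ : ℝ) (hρ : 0 < ρ)
    (xF xRCF : Fin p → ℝ) (hxF : dot a xF < b) :
    IsOptRCF a b f g ρ xF xRCF ↔
      ∃ l : ℝ, l ≠ 0 ∧ dot a xRCF - ρ * dualNorm g a = b ∧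
        l * dot a (xRCF - xF) = f (xRCF - xF) ∧ dualNorm f (l • a) ≤ 1 := by
  have hxF' : dot a xF < b + ρ * dualNorm g a :=
    hxF.trans_le (le_add_of_nonneg_right (mul_nonneg hρ.le (dualNorm_nonneg hg a)))
  rw [isOptRCF_iff_isOptCF hg hρ.le, isOptCF_iff hf ha hxF']
  simp only [sub_eq_iff_eq_add]

/-- Optimality conditions for robust counterfactuals under arbitrary norms
(Corollary 3): `x_RCF` is an optimal robust counterfactual iff there is `λ ≠ 0` with
`⟪a, x_RCF⟫ − ρ·g*(a) = b`, `λ⟪a, x_RCF − x_F⟫ = f(x_RCF − x_F)` and `f*(λ • a) ≤ 1`. -/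
theorem rcf_optimality_iff {p : ℕ} (hp : 1 ≤ p)
    (f g : (Fin p → ℝ) → ℝ) (hf : IsNorm f) (hg : IsNorm g)
    (a : Fin p → ℝ) (ha : a ≠ 0) (b : ℝ) (ρ : ℝ) (hρ : 0 < ρ)
    (xF xRCF : Fin p → ℝ) (hxF : dot a xF < b) (hne : xRCF ≠ xF) :
    IsOptRCF a b f g ρ xF xRCF ↔
      ∃ l : ℝ, l ≠ 0 ∧ dot a xRCF - ρ * dualNorm g a = b ∧
        l * dot a (xRCF - xF) = f (xRCF - xF) ∧ dualNorm f (l • a) ≤ 1 :=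
  rcf_optimality_iff_general f g hf hg a ha b ρ hρ xF xRCF hxF
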